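/- arXiv:1402.4168 — 9 statements merged into one kernel-verified Lean document; each statement's English description precedes it below -/
import Mathlib

section
/- Let G and R be locally compact Hausdorff topological groups and (A,μ) a partially crossed topological G-R-bimodule (A Hausdorff). For g ∈ G and (α,r) ∈ Der_c(G,(A,μ)) set g•(α,r) = (α̃, g•r), where α̃(h) = g•α(g⁻¹hg). Then g•(α,r) again lies in Der_c(G,(A,μ)), this defines a group action of G on Der_c(G,(A,μ)) acting by group automorphisms of (Der_c(G,(A,μ)),⋆), and the action map G × Der_c(G,(A,μ)) → Der_c(G,(A,μ)) is continuous; i.e., Der_c(G,(A,μ)) is a topological G-module. -/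
/-!
All algebraic claims are pointwise identities: conjugating by `g` preserves the crossed-homomorphism
rule, `μ (g • a) = g • μ a` transports the coboundary condition on `r`, and
`(g • r) • (g • a) = g • (r • a)` makes the action compatible with `⋆`. Continuity of the action
reduces to joint continuity of evaluation `C(G, A) × G → A`, which holds as `G` is locally compact.
-/

variable (G R A : Type*)
  [Group G] [TopologicalSpace G] [IsTopologicalGroup G]
  [Group R] [TopologicalSpace R] [IsTopologicalGroup R]
  [Group A] [TopologicalSpace A] [IsTopologicalGroup A]
  [MulDistribMulAction R A] [ContinuousSMul R A]
  [MulDistribMulAction G A] [ContinuousSMul G A]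
  [MulDistribMulAction G R] [ContinuousSMul G R]

/-- The set `Der_c(G,(A,μ))` inside `C(G,A) × R`. -/
def derSet (μ : A →* R) : Set (C(G, A) × R) :=
  {p | (∀ g h : G, p.1 (g * h) = p.1 g * g • p.1 h) ∧ ∀ g : G, μ (p.1 g) = p.2 * (g • p.2)⁻¹}

/-- The product `⋆` on (the ambient space of) `Der_c(G,(A,μ))`. -/
def dstar (p q : C(G, A) × R) : C(G, A) × R :=
  (⟨fun g => (p.2 • q.1 g) * p.1 g, (q.1.continuous.const_smul p.2).mul p.1.continuous⟩,
    p.2 * q.2)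

/-- The `G`-action on (the ambient space of) `Der_c(G,(A,μ))`:
`g • (α,r) = ((h ↦ g • α (g⁻¹ h g)), g • r)`. -/
def gact (g : G) (p : C(G, A) × R) : C(G, A) × R :=
  (⟨fun h => g • p.1 (g⁻¹ * h * g),
    (p.1.continuous.comp ((continuous_const.mul continuous_id).mul continuous_const)).const_smul
      g⟩,
    g • p.2)

variable {G R A}

section

omit [IsTopologicalGroup R]

section

omit [TopologicalSpace R] [IsTopologicalGroup A] [MulDistribMulAction R A] [ContinuousSMul R A]
  [ContinuousSMul G R]

@[simp]
lemma gact_fst_apply (g : G) (p : C(G, A) × R) (h : G) :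
    (gact G R A g p).1 h = g • p.1 (g⁻¹ * h * g) :=
  rfl

@[simp]
lemma gact_snd (g : G) (p : C(G, A) × R) : (gact G R A g p).2 = g • p.2 :=
  rfl

lemma gact_mem_derSet {μ : A →* R} (hμG : ∀ (g : G) (a : A), μ (g • a) = g • μ a) (g : G)
    {p : C(G, A) × R} (hp : p ∈ derSet G R A μ) : gact G R A g p ∈ derSet G R A μ := by
  obtain ⟨hcrossed, hμ⟩ := hp
  refine ⟨fun x y => ?_, fun x => ?_⟩
  · have hconj : g⁻¹ * (x * y) * g = (g⁻¹ * x * g) * (g⁻¹ * y * g) := by group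
    simp only [gact_fst_apply, hconj, hcrossed, smul_mul', smul_smul]
    congr 3
    group
  · simp only [gact_fst_apply, gact_snd, hμG, hμ, smul_mul', smul_inv', smul_smul]
    congr 3
    group

lemma gact_one (p : C(G, A) × R) : gact G R A 1 p = p := by
  ext h <;> simp

lemma gact_mul (g g' : G) (p : C(G, A) × R) :
    gact G R A (g * g') p = gact G R A g (gact G R A g' p) := by
  ext h
  · simp only [gact_fst_apply, mul_smul, mul_inv_rev, mul_assoc]
  · exact mul_smul g g' p.2

end

omit [ContinuousSMul G R] in
lemma gact_dstar (hcomp : ∀ (g : G) (r : R) (a : A), (g • r) • a = g • r • g⁻¹ • a) (g : G)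
    (p q : C(G, A) × R) :
    gact G R A g (dstar G R A p q) = dstar G R A (gact G R A g p) (gact G R A g q) := by
  ext h
  · simp [dstar, smul_mul', hcomp]
  · exact smul_mul' g p.2 q.2

omit [MulDistribMulAction R A] [ContinuousSMul R A] in
lemma continuous_gact [LocallyCompactSpace G] :
    Continuous fun x : G × (C(G, A) × R) => gact G R A x.1 x.2 := by
  refine .prodMk (ContinuousMap.continuous_of_continuous_uncurry _ ?_) (by fun_prop)
  have hconj : Continuous fun y : (G × (C(G, A) × R)) × G => y.1.2.1 (y.1.1⁻¹ * y.2 * y.1.1) := by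
    fun_prop
  exact continuous_fst.fst.smul hconj

end

theorem derc_topological_G_module_general
    [LocallyCompactSpace G]
    (μ : A →* R)
    (hμG : ∀ (g : G) (a : A), μ (g • a) = g • μ a)
    (hcomp : ∀ (g : G) (r : R) (a : A), (g • r) • a = g • r • g⁻¹ • a) :
    (∀ g : G, ∀ p ∈ derSet G R A μ, gact G R A g p ∈ derSet G R A μ) ∧
    (∀ p ∈ derSet G R A μ, gact G R A 1 p = p) ∧
    (∀ g g' : G, ∀ p ∈ derSet G R A μ,
      gact G R A (g * g') p = gact G R A g (gact G R A g' p)) ∧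
    (∀ g : G, ∀ p ∈ derSet G R A μ, ∀ q ∈ derSet G R A μ,
      gact G R A g (dstar G R A p q) = dstar G R A (gact G R A g p) (gact G R A g q)) ∧
    Continuous (fun x : G × (derSet G R A μ) => gact G R A x.1 x.2.val) :=
  ⟨fun g _ hp => gact_mem_derSet hμG g hp, fun p _ => gact_one p,
    fun g g' p _ => gact_mul g g' p, fun g p _ q _ => gact_dstar hcomp g p q,
    continuous_gact.comp (continuous_id.prodMap continuous_subtype_val)⟩

/-- Let `G`, `R` be locally compact Hausdorff groups and `(A,μ)` a partially
crossed topological `G-R`-bimodule (`A` Hausdorff). Then `g • (α,r) = ((h ↦ g • α (g⁻¹hg)), g • r)`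
maps `Der_c(G,(A,μ))` to itself, defines a group action of `G` acting by automorphisms of
`(Der_c(G,(A,μ)), ⋆)`, and the action map is continuous; i.e. `Der_c(G,(A,μ))` is a topological
`G`-module. -/
theorem derc_topological_G_module
    [LocallyCompactSpace G] [T2Space G] [LocallyCompactSpace R] [T2Space R] [T2Space A]
    (μ : A →* R) (hμc : Continuous μ)
    (hμR : ∀ (r : R) (a : A), μ (r • a) = r * μ a * r⁻¹)
    (hμG : ∀ (g : G) (a : A), μ (g • a) = g • μ a)
    (hcomp : ∀ (g : G) (r : R) (a : A), (g • r) • a = g • r • g⁻¹ • a)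
    (hpart : ∀ a : A, μ a ∈ commutator R → ∀ b : A, μ a • b = a * b * a⁻¹) :
    (∀ g : G, ∀ p ∈ derSet G R A μ, gact G R A g p ∈ derSet G R A μ) ∧
    (∀ p ∈ derSet G R A μ, gact G R A 1 p = p) ∧
    (∀ g g' : G, ∀ p ∈ derSet G R A μ,
      gact G R A (g * g') p = gact G R A g (gact G R A g' p)) ∧
    (∀ g : G, ∀ p ∈ derSet G R A μ, ∀ q ∈ derSet G R A μ,
      gact G R A g (dstar G R A p q) = dstar G R A (gact G R A g p) (gact G R A g q)) ∧
    Continuous (fun x : G × (derSet G R A μ) => gact G R A x.1 x.2.val) :=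
  derc_topological_G_module_general μ hμG hcomp
end

section
/- Let G and R be locally compact Hausdorff topological groups and (A,μ) a partially crossed topological G-R-bimodule (A Hausdorff). Suppose additionally that G is a topological R-module and that (r•g)•a = r•(g•(r⁻¹•a)) for all r ∈ R, g ∈ G, a ∈ A, and (r•g)•s = r·(g•(r⁻¹·s·r))·r⁻¹ for all r,s ∈ R, g ∈ G. For r ∈ R and (α,s) ∈ Der_c(G,(A,μ)) set r•(α,s) = (α̃, r·s·r⁻¹), where α̃(g) = r•α(r⁻¹•g). Then r•(α,s) again lies in Der_c(G,(A,μ)), this defines a group action of R on Der_c(G,(A,μ)) acting by group automorphisms of (Der_c(G,(A,μ)),⋆), and the action map R × Der_c(G,(A,μ)) → Der_c(G,(A,μ)) is continuous; i.e., Der_c(G,(A,μ)) is a topological R-module. -/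
variable (G R A : Type*)
  [Group G] [TopologicalSpace G] [IsTopologicalGroup G]
  [Group R] [TopologicalSpace R] [IsTopologicalGroup R]
  [Group A] [TopologicalSpace A] [IsTopologicalGroup A]
  [MulDistribMulAction R A] [ContinuousSMul R A]
  [MulDistribMulAction G A] [ContinuousSMul G A]
  [MulDistribMulAction G R] [ContinuousSMul G R]
  [MulDistribMulAction R G] [ContinuousSMul R G]

/-- The `R`-action on (the ambient space of) `Der_c(G,(A,μ))`:
`r • (α,s) = ((g ↦ r • α (r⁻¹ • g)), r * s * r⁻¹)`. -/
def ract (r : R) (p : C(G, A) × R) : C(G, A) × R :=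
  (⟨fun g => r • p.1 (r⁻¹ • g),
    (p.1.continuous.comp (continuous_const_smul r⁻¹)).const_smul r⟩,
    r * p.2 * r⁻¹)

theorem smul_inv_smul_smul_eq {K H X : Type*} [Group K] [MulAction K H] [SMul H X]
    [MulAction K X] (hcomp : ∀ (k : K) (h : H) (x : X), (k • h) • x = k • h • k⁻¹ • x)
    (k : K) (h : H) (x : X) : k • (k⁻¹ • h) • x = h • k • x := by
  simpa using (hcomp k (k⁻¹ • h) (k • x)).symm

section

variable {G R A : Type*} [Group G] [TopologicalSpace G] [Group R] [TopologicalSpace R]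
  [Group A] [TopologicalSpace A] [MulDistribMulAction R A] [ContinuousSMul R A]
  [MulDistribMulAction R G] [ContinuousSMul R G]

theorem ract_one (p : C(G, A) × R) : ract G R A 1 p = p := by
  ext <;> simp [ract]

theorem ract_mul (r s : R) (p : C(G, A) × R) :
    ract G R A (r * s) p = ract G R A r (ract G R A s p) := by
  ext
  · simp [ract, mul_smul]
  · simp only [ract]
    group

theorem ract_dstar [IsTopologicalGroup A] (r : R) (p q : C(G, A) × R) :
    ract G R A r (dstar G R A p q) = dstar G R A (ract G R A r p) (ract G R A r q) := by
  ext g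
  · simp [ract, dstar, smul_mul', mul_smul]
  · simp only [ract, dstar]
    group

theorem ract_mem_derSet [MulDistribMulAction G A] [MulDistribMulAction G R] {μ : A →* R}
    (hμR : ∀ (r : R) (a : A), μ (r • a) = r * μ a * r⁻¹)
    (hcomp' : ∀ (r : R) (g : G) (a : A), (r • g) • a = r • g • r⁻¹ • a)
    (hcomp'' : ∀ (r s : R) (g : G), (r • g) • s = r * (g • (r⁻¹ * s * r)) * r⁻¹)
    (r : R) {p : C(G, A) × R} (hp : p ∈ derSet G R A μ) :
    ract G R A r p ∈ derSet G R A μ := by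
  obtain ⟨hcocycle, hμp⟩ := hp
  refine ⟨fun g h => ?_, fun g => ?_⟩
  · simp only [ract, ContinuousMap.coe_mk]
    rw [smul_mul', hcocycle, smul_mul', smul_inv_smul_smul_eq hcomp']
  · simp only [ract, ContinuousMap.coe_mk]
    rw [hμR, hμp, hcomp'' r⁻¹ p.2 g, inv_inv]
    group

theorem continuous_ract [IsTopologicalGroup R] [LocallyCompactSpace G] :
    Continuous fun x : R × (C(G, A) × R) => ract G R A x.1 x.2 := by
  refine .prodMk (ContinuousMap.continuous_of_continuous_uncurry _ ?_) ?_
  · have hinv_smul : Continuous fun y : (R × (C(G, A) × R)) × G => y.1.1⁻¹ • y.2 :=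
      (continuous_inv.comp continuous_fst.fst).smul continuous_snd
    have heval : Continuous fun y : (R × (C(G, A) × R)) × G => y.1.2.1 (y.1.1⁻¹ • y.2) :=
      continuous_eval.comp (continuous_fst.snd.fst.prodMk hinv_smul)
    exact continuous_fst.fst.smul heval
  · exact (continuous_fst.mul continuous_snd.snd).mul continuous_fst.inv

end

theorem derc_topological_R_module
    [LocallyCompactSpace G]
    (μ : A →* R)
    (hμR : ∀ (r : R) (a : A), μ (r • a) = r * μ a * r⁻¹)
    (hcomp' : ∀ (r : R) (g : G) (a : A), (r • g) • a = r • g • r⁻¹ • a)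
    (hcomp'' : ∀ (r s : R) (g : G), (r • g) • s = r * (g • (r⁻¹ * s * r)) * r⁻¹) :
    (∀ r : R, ∀ p ∈ derSet G R A μ, ract G R A r p ∈ derSet G R A μ) ∧
    (∀ p ∈ derSet G R A μ, ract G R A 1 p = p) ∧
    (∀ r s : R, ∀ p ∈ derSet G R A μ,
      ract G R A (r * s) p = ract G R A r (ract G R A s p)) ∧
    (∀ r : R, ∀ p ∈ derSet G R A μ, ∀ q ∈ derSet G R A μ,
      ract G R A r (dstar G R A p q) = dstar G R A (ract G R A r p) (ract G R A r q)) ∧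
    Continuous (fun x : R × (derSet G R A μ) => ract G R A x.1 x.2.val) :=
  ⟨fun r _ hp => ract_mem_derSet hμR hcomp' hcomp'' r hp,
    fun p _ => ract_one p,
    fun r s p _ => ract_mul r s p,
    fun r p _ q _ => ract_dstar r p q,
    continuous_ract.comp (continuous_fst.prodMk continuous_snd.subtype_val)⟩
end

section
/- Let G and R be locally compact Hausdorff topological groups and (A,μ) a partially crossed topological G-R-bimodule (A Hausdorff). Suppose G and R act continuously on each other and on A, and these actions are compatible: (r•g)•s = r·(g•(r⁻¹·s·r))·r⁻¹ and (g•r)•h = g·(r•(g⁻¹·h·g))·g⁻¹ for all r,s ∈ R and g,h ∈ G, and (r•g)•a = r•(g•(r⁻¹•a)) and (g•r)•a = g•(r•(g⁻¹•a)) for all r ∈ R, g ∈ G, a ∈ A. Equip Der_c(G,(A,μ)) with the G-action g•(α,r) = ((h ↦ g•α(g⁻¹hg)), g•r) and the R-action r•(α,s) = ((g ↦ r•α(r⁻¹•g)), r·s·r⁻¹). Then the map γ : Der_c(G,(A,μ)) → R, (α,r) ↦ r, is a continuous group homomorphism satisfying γ(g•x) = g•γ(x) and γ(r•x) = r·γ(x)·r⁻¹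 for all g ∈ G, r ∈ R, x ∈ Der_c(G,(A,μ)), and the compatibility (g•r)•x = g•(r•(g⁻¹•x)) holds for all g ∈ G, r ∈ R, x ∈ Der_c(G,(A,μ)); i.e., (Der_c(G,(A,μ)), γ) is a precrossed topological G-R-bimodule. -/
/-!
Since `γ` is the projection `(α, r) ↦ r`, multiplicativity, continuity and the two
equivariance identities for `γ` hold by construction. The one identity with content is
`(g • r) • x = g • (r • (g⁻¹ • x))`: on the `R`-coordinate it is the fact that `g` acts by
automorphisms, and on the cocycle it follows from the compatibility `(g • r⁻¹) • h =
g (r⁻¹ • (g⁻¹ h g)) g⁻¹` of the actions of `G` and `R` on each other, applied to the argument,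
together with `(g • r) • a = g • r • g⁻¹ • a` applied to the value.
-/

variable (G R A : Type*)
  [Group G] [TopologicalSpace G] [IsTopologicalGroup G]
  [Group R] [TopologicalSpace R] [IsTopologicalGroup R]
  [Group A] [TopologicalSpace A] [IsTopologicalGroup A]
  [MulDistribMulAction R A] [ContinuousSMul R A]
  [MulDistribMulAction G A] [ContinuousSMul G A]
  [MulDistribMulAction G R] [ContinuousSMul G R]
  [MulDistribMulAction R G] [ContinuousSMul R G]

theorem smul_mul_inv_smul_mul_inv {M N : Type*} [Group M] [Group N] [MulDistribMulAction M N]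
    (g : M) (r s : N) : g • (r * g⁻¹ • s * r⁻¹) = g • r * s * (g • r)⁻¹ := by
  rw [smul_mul', smul_mul', smul_inv_smul, smul_inv']

section Compatibility

variable {G R A : Type*}
  [Group G] [TopologicalSpace G] [IsTopologicalGroup G]
  [Group R] [TopologicalSpace R] [Group A] [TopologicalSpace A]
  [MulDistribMulAction R A] [ContinuousSMul R A]
  [MulDistribMulAction G A] [ContinuousSMul G A]
  [MulDistribMulAction G R] [MulDistribMulAction R G] [ContinuousSMul R G]

theorem ract_smul_fst_apply
    (hGRA : ∀ (g : G) (r : R) (a : A), (g • r) • a = g • r • g⁻¹ • a)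
    (hGRG : ∀ (g h : G) (r : R), (g • r) • h = g * (r • (g⁻¹ * h * g)) * g⁻¹)
    (g : G) (r : R) (p : C(G, A) × R) (h : G) :
    (ract G R A (g • r) p).1 h = (gact G R A g (ract G R A r (gact G R A g⁻¹ p))).1 h := by
  simp only [ract, gact, ContinuousMap.coe_mk, inv_inv]
  rw [hGRA, ← smul_inv', hGRG g h r⁻¹]

theorem ract_smul_eq_gact_ract_gact
    (hGRA : ∀ (g : G) (r : R) (a : A), (g • r) • a = g • r • g⁻¹ • a)
    (hGRG : ∀ (g h : G) (r : R), (g • r) • h = g * (r • (g⁻¹ * h * g)) * g⁻¹)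
    (g : G) (r : R) (p : C(G, A) × R) :
    ract G R A (g • r) p = gact G R A g (ract G R A r (gact G R A g⁻¹ p)) :=
  Prod.ext (ContinuousMap.ext (ract_smul_fst_apply hGRA hGRG g r p))
    (smul_mul_inv_smul_mul_inv g r p.2).symm

end Compatibility

theorem derc_gamma_precrossed_bimodule
    (μ : A →* R)
    (hGRA : ∀ (g : G) (r : R) (a : A), (g • r) • a = g • r • g⁻¹ • a)
    (hGRG : ∀ (g h : G) (r : R), (g • r) • h = g * (r • (g⁻¹ * h * g)) * g⁻¹) :
    Continuous (fun p : derSet G R A μ => p.val.2) ∧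
    (∀ p ∈ derSet G R A μ, ∀ q ∈ derSet G R A μ, (dstar G R A p q).2 = p.2 * q.2) ∧
    (∀ g : G, ∀ p ∈ derSet G R A μ, (gact G R A g p).2 = g • p.2) ∧
    (∀ r : R, ∀ p ∈ derSet G R A μ, (ract G R A r p).2 = r * p.2 * r⁻¹) ∧
    (∀ (g : G) (r : R), ∀ p ∈ derSet G R A μ,
      ract G R A (g • r) p = gact G R A g (ract G R A r (gact G R A g⁻¹ p))) :=
  ⟨continuous_subtype_val.snd, fun _ _ _ _ => rfl, fun _ _ _ => rfl, fun _ _ _ => rfl,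
    fun g r p _ => ract_smul_eq_gact_ract_gact hGRA hGRG g r p⟩
end

section
/- Let G be a locally compact Hausdorff topological group with trivial center and (A,μ) a partially crossed topological G-module with A compact Hausdorff. Then Inn(G,(A,μ)) = {((g ↦ a·(g•a)⁻¹), μ(a)) : a ∈ A} is a compact, hence closed, subset of Der_c(G,(A,μ)) (with its subspace topology from C(G,A) × G). -/
variable (G A : Type*)
  [Group G] [TopologicalSpace G] [IsTopologicalGroup G]
  [Group A] [TopologicalSpace A] [IsTopologicalGroup A]
  [MulDistribMulAction G A] [ContinuousSMul G A]

/-- `Der_c(G,(A,μ))` for a topological `G`-module `(A,μ)` (with `G` acting on itself by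
conjugation): pairs `(α,r)` with `α` a continuous crossed homomorphism and
`μ (α g) = r * g * r⁻¹ * g⁻¹` for all `g`. -/
def derSetG (μ : A →* G) : Set (C(G, A) × G) :=
  {p | (∀ g h : G, p.1 (g * h) = p.1 g * g • p.1 h) ∧
    ∀ g : G, μ (p.1 g) = p.2 * g * p.2⁻¹ * g⁻¹}

/-- `Inn(G,(A,μ)) = {((g ↦ a * (g • a)⁻¹), μ a) : a ∈ A}` (for trivial center). -/
def innSetG (μ : A →* G) : Set (C(G, A) × G) :=
  {p | ∃ a : A, (∀ g : G, p.1 g = a * (g • a)⁻¹) ∧ p.2 = μ a}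

/-!
`Inn(G,(A,μ))` is the image of `A` under the continuous map `a ↦ (g ↦ a * (g • a)⁻¹, μ a)`,
hence compact when `A` is; being compact in the Hausdorff space `C(G,A) × G`, it is closed
there and so also in `Der_c(G,(A,μ))`. That it lies in `Der_c` at all is the computation
that principal crossed homomorphisms are crossed homomorphisms, with `μ`-image the
commutator `[μ a, g]` by equivariance of `μ`.
-/

section CrossedHom

variable {M N : Type*} [Group M] [Group N] [MulDistribMulAction M N]

theorem mul_smul_inv_mul (a : N) (g h : M) :
    a * ((g * h) • a)⁻¹ = a * (g • a)⁻¹ * g • (a * (h • a)⁻¹) := by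
  simp only [mul_smul, smul_mul', smul_inv']
  group

theorem map_mul_smul_inv {μ : N →* M} (hμ : ∀ (g : M) (a : N), μ (g • a) = g * μ a * g⁻¹)
    (a : N) (g : M) : μ (a * (g • a)⁻¹) = μ a * g * (μ a)⁻¹ * g⁻¹ := by
  rw [map_mul, map_inv, hμ]
  group

variable [TopologicalSpace M] [TopologicalSpace N]

theorem innSetG_subset_derSetG {μ : N →* M}
    (hμ : ∀ (g : M) (a : N), μ (g • a) = g * μ a * g⁻¹) :
    innSetG M N μ ⊆ derSetG M N μ := by
  rintro ⟨α, r⟩ ⟨a, hα, rfl⟩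
  refine ⟨fun g h => ?_, fun g => ?_⟩
  · simp only [hα, mul_smul_inv_mul]
  · rw [hα, map_mul_smul_inv hμ]

variable [IsTopologicalGroup N] [ContinuousSMul M N]

/-- The principal crossed homomorphism `g ↦ a * (g • a)⁻¹` determined by `a`. -/
def innerCrossedHom : C(N, C(M, N)) :=
  ContinuousMap.curry ⟨fun p : N × M => p.1 * (p.2 • p.1)⁻¹, by fun_prop⟩

@[simp]
theorem innerCrossedHom_apply (a : N) (g : M) : innerCrossedHom a g = a * (g • a)⁻¹ :=
  rfl

theorem innSetG_eq_range (μ : N →* M) :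
    innSetG M N μ = Set.range fun a => (innerCrossedHom a, μ a) := by
  ext ⟨α, r⟩
  constructor
  · rintro ⟨a, hα, rfl⟩
    exact ⟨a, Prod.ext (ContinuousMap.ext fun g => (hα g).symm) rfl⟩
  · rintro ⟨a, ha⟩
    cases ha
    exact ⟨a, innerCrossedHom_apply a, rfl⟩

theorem isCompact_innSetG [CompactSpace N] {μ : N →* M} (hμ : Continuous μ) :
    IsCompact (innSetG M N μ) := by
  rw [innSetG_eq_range]
  exact isCompact_range (innerCrossedHom.continuous.prodMk hμ)

end CrossedHom

theorem innSet_compact_closed_trivial_center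
    [T2Space G] [CompactSpace A] [T2Space A]
    (μ : A →* G) (hμc : Continuous μ)
    (hμG : ∀ (g : G) (a : A), μ (g • a) = g * μ a * g⁻¹) :
    IsCompact (innSetG G A μ) ∧ innSetG G A μ ⊆ derSetG G A μ ∧
      IsClosed (Subtype.val ⁻¹' innSetG G A μ : Set (derSetG G A μ)) :=
  have hcompact := isCompact_innSetG hμc
  ⟨hcompact, innSetG_subset_derSetG hμG,
    hcompact.isClosed.preimage continuous_subtype_val⟩
end

section
/- Let G be a topological group and A a compact Hausdorff abelian topological G-module. Then Inn(G,A) = {(g ↦ a·(g•a)⁻¹) : a ∈ A} is a compact, hence closed, subset of Der_c(G,A), the set of continuous crossed homomorphisms G → A with the compact-open topology. -/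
variable (G A : Type*)
  [Group G] [TopologicalSpace G] [IsTopologicalGroup G]
  [CommGroup A] [TopologicalSpace A] [IsTopologicalGroup A]
  [MulDistribMulAction G A] [ContinuousSMul G A]

/-- `Der_c(G,A)`: continuous crossed homomorphisms `G → A` inside `C(G,A)`. -/
def dercSet : Set C(G, A) := {α | ∀ g h : G, α (g * h) = α g * g • α h}

/-- `Inn(G,A) = {(g ↦ a * (g • a)⁻¹) : a ∈ A}`, the inner (principal) crossed homomorphisms. -/
def innSet : Set C(G, A) := {f | ∃ a : A, ∀ g : G, f g = a * (g • a)⁻¹}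

section InnerCrossedHom

variable {M X : Type*} [Monoid M] [TopologicalSpace M]
  [Group X] [TopologicalSpace X] [IsTopologicalGroup X]
  [MulDistribMulAction M X] [ContinuousSMul M X]

def innMap : C(X, C(M, X)) :=
  ContinuousMap.curry ⟨fun p => p.1 * (p.2 • p.1)⁻¹, by fun_prop⟩

@[simp]
lemma innMap_apply (a : X) (g : M) : innMap a g = a * (g • a)⁻¹ := rfl

lemma innMap_apply_mul (a : X) (g h : M) :
    innMap a (g * h) = innMap a g * g • innMap a h := by
  simp only [innMap_apply, smul_mul', smul_inv', mul_smul, mul_assoc, inv_mul_cancel_left]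

end InnerCrossedHom

section InnerSet

omit [IsTopologicalGroup G]

lemma innSet_eq_range_innMap : innSet G A = Set.range innMap := by
  ext f
  constructor
  · rintro ⟨a, hf⟩
    exact ⟨a, ContinuousMap.ext fun g => (hf g).symm⟩
  · rintro ⟨a, rfl⟩
    exact ⟨a, innMap_apply a⟩

lemma innSet_subset_dercSet : innSet G A ⊆ dercSet G A := by
  rw [innSet_eq_range_innMap]
  rintro _ ⟨a, rfl⟩
  exact innMap_apply_mul a

end InnerSet

/-- Let `G` be a topological group and `A` a compact Hausdorff abelian
topological `G`-module. Then `Inn(G,A)` is a compact, hence closed, subset of `Der_c(G,A)`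
(with the compact-open topology). -/
theorem innSet_compact_closed
    [CompactSpace A] [T2Space A] :
    IsCompact (innSet G A) ∧ innSet G A ⊆ dercSet G A ∧
      IsClosed (Subtype.val ⁻¹' innSet G A : Set (dercSet G A)) := by
  have hcompact : IsCompact (innSet G A) := by
    rw [innSet_eq_range_innMap]
    exact isCompact_range innMap.continuous
  exact ⟨hcompact, innSet_subset_dercSet G A, hcompact.isClosed.preimage continuous_subtype_val⟩
end

section
/- Let G be a locally compact Hausdorff topological group and A a compact Hausdorff abelian topological group with no small subgroups. Then Hom_c(G,A), with the compact-open topology, is a locally compact topological group. -/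
/-!
Take a closed symmetric neighbourhood `V` of `1` inside the neighbourhood with no small subgroups,
so that the only `a` with `a ^ n ∈ V` for all `n` is `1`. By compactness of `A`, `V` then forces
escape uniformly: for every neighbourhood `W` of `1` there is `N` such that `a ^ j ∈ V` for all
`j ≤ N` implies `a ∈ W`. Consequently, for a compact neighbourhood `K` of `1` in `G`, the
homomorphisms mapping `K` into `V` are equicontinuous at `1` (if `x ^ j ∈ K` for `j ≤ N`, then
`f x ∈ W`), and Arzelà–Ascoli makes them a compact neighbourhood of `1` in `Hom_c(G, A)`.
-/

open Filter Topology

theorem exists_forall_pow_mem_imp_mem {M : Type*} [Monoid M] [TopologicalSpace M]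
    [ContinuousMul M] [CompactSpace M] {V : Set M} (hV : IsClosed V)
    (hV1 : ∀ a : M, (∀ n : ℕ, a ^ n ∈ V) → a = 1) {W : Set M} (hW : W ∈ 𝓝 1) :
    ∃ N : ℕ, ∀ a : M, (∀ j ≤ N, a ^ j ∈ V) → a ∈ W := by
  let escapes (n : ℕ) : Set M := ⋃ j ≤ n, (· ^ j) ⁻¹' Vᶜ
  have hcover : (interior W)ᶜ ⊆ ⋃ n, escapes n := by
    intro a ha
    by_contra! h
    simp only [escapes, Set.mem_iUnion, not_exists] at h
    refine ha (hV1 a (fun n => ?_) ▸ mem_interior_iff_mem_nhds.mpr hW)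
    simpa using h n n le_rfl
  obtain ⟨N, hN⟩ := isOpen_interior.isClosed_compl.isCompact.elim_directed_cover escapes
    (fun n => isOpen_biUnion fun j _ => hV.isOpen_compl.preimage (continuous_pow j)) hcover
    (Monotone.directed_le fun _ _ hmn =>
      Set.biUnion_subset_biUnion_left fun _ hj => le_trans hj hmn)
  refine ⟨N, fun a ha => interior_subset (not_not.mp fun h => ?_)⟩
  obtain ⟨j, hj, haj⟩ := Set.mem_iUnion₂.mp (hN h)
  exact haj (ha j hj)

theorem eq_one_of_forall_pow_mem {A : Type*} [Group A] {V : Set A}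
    (hV : ∀ H : Subgroup A, (H : Set A) ⊆ V → H = ⊥) (hVinv : V⁻¹ = V) {a : A}
    (ha : ∀ n : ℕ, a ^ n ∈ V) : a = 1 := by
  rw [← Subgroup.zpowers_eq_bot]
  refine hV _ ?_
  rintro _ ⟨n | n, rfl⟩
  · simpa using ha n
  · change a ^ Int.negSucc n ∈ V
    rw [zpow_negSucc, ← hVinv]
    simpa using ha (n + 1)

theorem MonoidHom.equicontinuousAt_one_of_mapsTo {X Y : Type*} [TopologicalSpace X] [Monoid X]
    [ContinuousMul X] [UniformSpace Y] [Group Y] [IsUniformGroup Y] {U : Set X} {V : Set Y}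
    (hU : U ∈ 𝓝 1) (hV : ∀ W ∈ 𝓝 (1 : Y), ∃ N : ℕ, ∀ a : Y, (∀ j ≤ N, a ^ j ∈ V) → a ∈ W) :
    EquicontinuousAt (fun f : {f : X →* Y | Set.MapsTo f U V} ↦ (f : X → Y)) 1 := by
  rw [(𝓝 (1 : Y)).basis_sets.uniformity_of_nhds_one.equicontinuousAt_iff_right]
  intro W hW
  obtain ⟨N, hN⟩ := hV W hW
  have hpow : ∀ᶠ x in 𝓝 (1 : X), ∀ j ∈ Set.Iic N, x ^ j ∈ U :=
    (eventually_all_finite (Set.finite_Iic N)).mpr fun j _ =>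
      (continuous_pow j).continuousAt.preimage_mem_nhds (by rwa [one_pow])
  filter_upwards [hpow] with x hx
  rintro ⟨f, hf⟩
  change f x / f 1 ∈ W
  rw [map_one, div_one]
  exact hN _ fun j hj => map_pow f x j ▸ hf (hx j hj)

theorem homc_locallyCompact_of_compact_target_general
    (G A : Type*) [Group G] [TopologicalSpace G] [IsTopologicalGroup G]
    [LocallyCompactSpace G]
    [CommGroup A] [TopologicalSpace A] [IsTopologicalGroup A] [CompactSpace A] [T2Space A]
    (hnss : ∃ U ∈ nhds (1 : A), ∀ H : Subgroup A, (H : Set A) ⊆ U → H = ⊥) :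
    LocallyCompactSpace (ContinuousMonoidHom G A) := by
  obtain ⟨U, hU, hUnss⟩ := hnss
  obtain ⟨V, hV, hVc, hVinv, hVU⟩ := exists_closed_nhds_one_inv_eq_mul_subset hU
  have hVnss : ∀ H : Subgroup A, (H : Set A) ⊆ V → H = ⊥ := fun H hH =>
    hUnss H fun x hx => hVU ⟨x, hH hx, 1, mem_of_mem_nhds hV, mul_one x⟩
  have escape : ∀ W ∈ 𝓝 (1 : A), ∃ N : ℕ, ∀ a : A, (∀ j ≤ N, a ^ j ∈ V) → a ∈ W :=
    fun _ => exists_forall_pow_mem_imp_mem hVc fun _ => eq_one_of_forall_pow_mem hVnss hVinv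
  obtain ⟨K, hKc, hK⟩ := exists_compact_mem_nhds (1 : G)
  let : UniformSpace A := IsTopologicalGroup.rightUniformSpace A
  have : IsUniformGroup A := isUniformGroup_of_commGroup
  exact ContinuousMonoidHom.locallyCompactSpace_of_equicontinuousAt K V hKc hV
    (MonoidHom.equicontinuousAt_one_of_mapsTo hK escape)

/-- Let `G` be a locally compact Hausdorff group and `A` a compact Hausdorff
abelian topological group with no small subgroups. Then `Hom_c(G,A)`, with the compact-open
topology, is a locally compact topological group. -/
theorem homc_locallyCompact_of_compact_target
    (G A : Type*) [Group G] [TopologicalSpace G] [IsTopologicalGroup G]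
    [LocallyCompactSpace G] [T2Space G]
    [CommGroup A] [TopologicalSpace A] [IsTopologicalGroup A] [CompactSpace A] [T2Space A]
    (hnss : ∃ U ∈ nhds (1 : A), ∀ H : Subgroup A, (H : Set A) ⊆ U → H = ⊥) :
    LocallyCompactSpace (ContinuousMonoidHom G A) :=
  homc_locallyCompact_of_compact_target_general G A hnss
end

section
/- Let G be a locally compact Hausdorff topological group that is compactly generated (i.e., generated as a group by some compact subset), and let A be a locally compact Hausdorff abelian topological group with no small subgroups. Then Hom_c(G,A), with the compact-open topology, is a locally compact topological group. -/
/-!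
Fix a compact generating set `K` of `G` that is a neighbourhood of `1`, and a compact symmetric
neighbourhood `V` of `1` in `A` containing no nontrivial subgroup. By compactness of `V`, every
neighbourhood of `1` in `A` contains `{y | y, …, yⁿ ∈ V}` for some `n`; a homomorphism mapping `K`
into `V` maps the neighbourhood `{x | x, …, xⁿ ∈ K}` of `1` into it, so these homomorphisms form
an equicontinuous family. As `K` generates `G`, their values at each point lie in a fixed compact
set, and Arzelà–Ascoli makes `{f | f(K) ⊆ V}` a compact neighbourhood of `1` in `Hom_c(G, A)`.
-/

open Filter Set Topology Pointwise

section PowerSets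

variable {M : Type*} [Monoid M] [TopologicalSpace M] [ContinuousMul M]

theorem eventually_forall_pow_mem {K : Set M} (hK : K ∈ 𝓝 (1 : M)) (n : ℕ) :
    ∀ᶠ x in 𝓝 (1 : M), ∀ k ≤ n, x ^ k ∈ K :=
  (eventually_all_finite (finite_Iic n)).2 fun k _ ↦
    (continuous_pow k).tendsto' 1 1 (one_pow k) hK

theorem IsClosed.setOf_forall_pow_mem {V : Set M} (hV : IsClosed V) (n : ℕ) :
    IsClosed {x : M | ∀ k ≤ n, x ^ k ∈ V} := by
  simp only [ofPred_forall]
  exact isClosed_iInter fun k ↦ isClosed_iInter fun _ ↦ hV.preimage (continuous_pow k)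

end PowerSets

theorem zpowers_subset_of_forall_pow_mem {A : Type*} [Group A] {V : Set A} (hV : V⁻¹ ⊆ V)
    {y : A} (hy : ∀ k : ℕ, y ^ k ∈ V) : (Subgroup.zpowers y : Set A) ⊆ V := by
  rintro - ⟨m, rfl⟩
  obtain ⟨k, rfl | rfl⟩ := Int.eq_nat_or_neg m
  · simpa using hy k
  · simpa using hV (inv_mem_inv.2 (hy k))

theorem exists_isCompact_inv_subset_nhds_one_subset {A : Type*} [Group A] [TopologicalSpace A]
    [IsTopologicalGroup A] [LocallyCompactSpace A] [T2Space A] {U : Set A} (hU : U ∈ 𝓝 1) :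
    ∃ V ∈ 𝓝 (1 : A), IsCompact V ∧ V⁻¹ ⊆ V ∧ V ⊆ U := by
  obtain ⟨V, hV, hVU, hVc⟩ := local_compact_nhds hU
  refine ⟨V ∩ V⁻¹, inter_mem hV (inv_mem_nhds_one A hV), hVc.inter hVc.inv, ?_,
    inter_subset_left.trans hVU⟩
  simp [inter_inv, inter_comm]

theorem exists_setOf_forall_pow_mem_subset {A : Type*} [Group A] [TopologicalSpace A]
    [ContinuousMul A] [T2Space A] {V : Set A} (hVc : IsCompact V) (hVinv : V⁻¹ ⊆ V)
    (hV : ∀ H : Subgroup A, (H : Set A) ⊆ V → H = ⊥) {O : Set A} (hO : O ∈ 𝓝 1) :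
    ∃ n : ℕ, {y : A | ∀ k ≤ n, y ^ k ∈ V} ⊆ O := by
  set W : ℕ → Set A := fun n ↦ {y | ∀ k ≤ n + 1, y ^ k ∈ V}
  have hW_anti : Antitone W := antitone_nat_of_succ_le fun n y hy k hk ↦ hy k (by omega)
  have hWc : ∀ n, IsCompact (W n) := fun n ↦
    hVc.of_isClosed_subset (hVc.isClosed.setOf_forall_pow_mem _) fun y hy ↦ by
      simpa using hy 1 (by omega)
  have hW_inter : ∀ y ∈ ⋂ n, W n, y = 1 := fun y hy ↦ by
    have hpow : ∀ k : ℕ, y ^ k ∈ V := fun k ↦ mem_iInter.1 hy k k (by omega)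
    exact Subgroup.zpowers_eq_bot.1 (hV _ (zpowers_subset_of_forall_pow_mem hVinv hpow))
  obtain ⟨n, hn⟩ := exists_subset_nhds_of_isCompact hW_anti.directed_ge hWc
    fun y hy ↦ hW_inter y hy ▸ hO
  exact ⟨n + 1, hn⟩

theorem MonoidHom.exists_isCompact_forall_mapsTo_apply_mem {G A : Type*} [Group G] [Group A]
    [TopologicalSpace A] [IsTopologicalGroup A] {K : Set G} (hK : Subgroup.closure K = ⊤)
    {V : Set A} (hV : IsCompact V) (x : G) :
    ∃ Q : Set A, IsCompact Q ∧ ∀ f : G →* A, MapsTo f K V → f x ∈ Q := by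
  have hx : x ∈ Subgroup.closure K := hK ▸ Subgroup.mem_top x
  induction hx using Subgroup.closure_induction with
  | mem z hz => exact ⟨V, hV, fun f hf ↦ hf hz⟩
  | one => exact ⟨{1}, isCompact_singleton, fun f _ ↦ by simp⟩
  | mul z w _ _ ihz ihw =>
    obtain ⟨Q₁, hQ₁, h₁⟩ := ihz
    obtain ⟨Q₂, hQ₂, h₂⟩ := ihw
    exact ⟨Q₁ * Q₂, hQ₁.mul hQ₂, fun f hf ↦ by
      rw [map_mul]; exact mul_mem_mul (h₁ f hf) (h₂ f hf)⟩
  | inv z _ ih =>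
    obtain ⟨Q, hQ, h⟩ := ih
    exact ⟨Q⁻¹, hQ.inv, fun f hf ↦ by rw [map_inv]; exact inv_mem_inv.2 (h f hf)⟩

theorem MonoidHom.equicontinuous_of_mapsTo {G A : Type*} [Group G] [TopologicalSpace G]
    [IsTopologicalGroup G] [UniformSpace A] [Group A] [IsUniformGroup A] {K : Set G}
    (hK : K ∈ 𝓝 (1 : G)) {V : Set A}
    (hV : ∀ O ∈ 𝓝 (1 : A), ∃ n : ℕ, {y : A | ∀ k ≤ n, y ^ k ∈ V} ⊆ O) :
    Equicontinuous (fun f : {f : G →* A | MapsTo f K V} ↦ (f : G → A)) := by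
  refine equicontinuous_of_equicontinuousAt_one Subtype.val ?_
  rw [(𝓝 (1 : A)).basis_sets.uniformity_of_nhds_one.equicontinuousAt_iff_right]
  intro O hO
  obtain ⟨n, hn⟩ := hV O hO
  filter_upwards [eventually_forall_pow_mem hK n] with x hx f
  simp only [Function.comp_apply, map_one, div_one]
  exact hn fun k hk ↦ map_pow f.1 x k ▸ f.2 (hx k hk)

namespace ContinuousMonoidHom

variable {X Y : Type*} [Group X] [TopologicalSpace X]

theorem setOf_mapsTo_mem_nhds_one [Monoid Y] [TopologicalSpace Y] {U : Set X} {V : Set Y}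
    (hU : IsCompact U) (hV : V ∈ 𝓝 (1 : Y)) : {f : X →ₜ* Y | MapsTo f U V} ∈ 𝓝 1 := by
  have : ∀ᶠ g : C(X, Y) in 𝓝 (1 : X →ₜ* Y).toContinuousMap, MapsTo g U (interior V) :=
    ContinuousMap.eventually_mapsTo hU isOpen_interior fun _ _ ↦ mem_interior_iff_mem_nhds.2 hV
  exact mem_of_superset ((isInducing_toContinuousMap X Y).continuous.tendsto 1 this)
    fun f hf ↦ hf.mono_right interior_subset

theorem isCompact_setOf_mapsTo [UniformSpace Y] [Group Y] [IsTopologicalGroup Y] [T2Space Y]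
    {U : Set X} (hU : Subgroup.closure U = ⊤) {V : Set Y} (hV : IsCompact V)
    (h : Equicontinuous (fun f : {f : X →* Y | MapsTo f U V} ↦ (f : X → Y))) :
    IsCompact {f : X →ₜ* Y | MapsTo f U V} := by
  set S := {f : X →ₜ* Y | MapsTo f U V}
  have hS : (⇑) '' (toContinuousMap '' S) = (⇑) '' {f : X →* Y | MapsTo f U V} := by
    ext g
    constructor
    · rintro ⟨-, ⟨f, hf, rfl⟩, rfl⟩
      exact ⟨f, hf, rfl⟩
    · rintro ⟨f, hf, rfl⟩
      exact ⟨_, ⟨⟨f, h.continuous ⟨f, hf⟩⟩, hf, rfl⟩, rfl⟩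
  have hS_eq : (⇑) '' {f : X →* Y | MapsTo f U V} =
      U.pi (fun _ ↦ V) ∩ range ((⇑) : (X →* Y) → X → Y) := by
    ext g
    exact ⟨fun ⟨f, hf, hg⟩ ↦ hg ▸ ⟨hf, f, rfl⟩,
      fun ⟨hg, f, hf⟩ ↦ ⟨f, fun x hx ↦ hf ▸ hg x hx, hf⟩⟩
  choose Q hQc hQ using MonoidHom.exists_isCompact_forall_mapsTo_apply_mem hU hV
  have hS_compact : IsCompact ((⇑) '' (toContinuousMap '' S)) := by
    refine (isCompact_univ_pi hQc).of_isClosed_subset ?_ ?_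
    · rw [hS, hS_eq]
      exact (isClosed_set_pi fun _ _ ↦ hV.isClosed).inter (MonoidHom.isClosed_range_coe X Y)
    · rw [hS]
      rintro - ⟨f, hf, rfl⟩ x -
      exact hQ x f hf
  have hS_equicontinuous : Equicontinuous ((↑) : toContinuousMap '' S → X → Y) := by
    rw [equicontinuous_iff_range, ← image_eq_range, hS, image_eq_range]
    exact equicontinuous_iff_range.1 h
  exact (isInducing_toContinuousMap X Y).isCompact_iff.2
    (ArzelaAscoli.isCompact_of_equicontinuous _ hS_compact hS_equicontinuous)

end ContinuousMonoidHom

theorem homc_locallyCompact_of_compactlyGenerated_general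
    (G A : Type*) [Group G] [TopologicalSpace G] [IsTopologicalGroup G]
    [LocallyCompactSpace G]
    (hgen : ∃ K : Set G, IsCompact K ∧ Subgroup.closure K = ⊤)
    [CommGroup A] [TopologicalSpace A] [IsTopologicalGroup A] [LocallyCompactSpace A] [T2Space A]
    (hnss : ∃ U ∈ nhds (1 : A), ∀ H : Subgroup A, (H : Set A) ⊆ U → H = ⊥) :
    LocallyCompactSpace (ContinuousMonoidHom G A) := by
  let : UniformSpace A := IsTopologicalGroup.rightUniformSpace A
  have : IsUniformGroup A := isUniformGroup_of_commGroup
  obtain ⟨K₀, hK₀c, hK₀gen⟩ := hgen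
  obtain ⟨C, hCc, hC⟩ := exists_compact_mem_nhds (1 : G)
  have hKgen : Subgroup.closure (K₀ ∪ C) = ⊤ :=
    top_unique (hK₀gen ▸ Subgroup.closure_mono subset_union_left)
  obtain ⟨U, hU, hUnss⟩ := hnss
  obtain ⟨V, hV, hVc, hVinv, hVU⟩ := exists_isCompact_inv_subset_nhds_one_subset hU
  have hequi := MonoidHom.equicontinuous_of_mapsTo (K := K₀ ∪ C)
    (mem_of_superset hC subset_union_right) fun _ hO ↦
      exists_setOf_forall_pow_mem_subset hVc hVinv (fun H hH ↦ hUnss H (hH.trans hVU)) hO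
  exact (ContinuousMonoidHom.isCompact_setOf_mapsTo hKgen hVc hequi)
    |>.locallyCompactSpace_of_mem_nhds_of_group
      (ContinuousMonoidHom.setOf_mapsTo_mem_nhds_one (hK₀c.union hCc) hV)

/-- Let `G` be a locally compact Hausdorff compactly generated group and `A`
a locally compact Hausdorff abelian topological group with no small subgroups. Then
`Hom_c(G,A)`, with the compact-open topology, is a locally compact topological group. -/
theorem homc_locallyCompact_of_compactlyGenerated
    (G A : Type*) [Group G] [TopologicalSpace G] [IsTopologicalGroup G]
    [LocallyCompactSpace G] [T2Space G]
    (hgen : ∃ K : Set G, IsCompact K ∧ Subgroup.closure K = ⊤)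
    [CommGroup A] [TopologicalSpace A] [IsTopologicalGroup A] [LocallyCompactSpace A] [T2Space A]
    (hnss : ∃ U ∈ nhds (1 : A), ∀ H : Subgroup A, (H : Set A) ⊆ U → H = ⊥) :
    LocallyCompactSpace (ContinuousMonoidHom G A) :=
  homc_locallyCompact_of_compactlyGenerated_general G A hgen hnss
end

section
/- Let G be a compact Hausdorff topological group and A a Hausdorff abelian topological group with no small subgroups. Then Hom_c(G,A), with the compact-open topology, is a discrete topological group. -/
/-!
Let `U` be a neighbourhood of `1` in `A` containing no nontrivial subgroup, and `V ⊆ U` an open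
neighbourhood of `1`. Since `G` is compact, the homomorphisms mapping all of `G` into `V` form a
compact-open neighbourhood of the trivial homomorphism. The range of such a homomorphism is a
subgroup inside `U`, hence trivial, so this neighbourhood is `{1}`; translating, every point of
the topological group `Hom_c(G, A)` is isolated.
-/

theorem MonoidHom.eq_one_of_forall_mem {G A : Type*} [Group G] [Group A] {U : Set A}
    (hU : ∀ H : Subgroup A, (H : Set A) ⊆ U → H = ⊥) (f : G →* A) (hf : ∀ x, f x ∈ U) :
    f = 1 := by
  have hrange : f.range = ⊥ := hU _ (Set.range_subset_iff.mpr hf)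
  ext x
  have hx : f x ∈ f.range := ⟨x, rfl⟩
  rwa [hrange, Subgroup.mem_bot] at hx

namespace ContinuousMonoidHom

theorem isOpen_setOf_forall_mem {G A : Type*} [Monoid G] [TopologicalSpace G] [CompactSpace G]
    [Monoid A] [TopologicalSpace A] {V : Set A} (hV : IsOpen V) :
    IsOpen {f : ContinuousMonoidHom G A | ∀ x, f x ∈ V} := by
  have hmaps : IsOpen {g : C(G, A) | Set.MapsTo g Set.univ V} :=
    ContinuousMap.isOpen_setOfPred_mapsTo isCompact_univ hV
  simpa [Set.MapsTo] using hmaps.preimage (isInducing_toContinuousMap G A).continuous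

end ContinuousMonoidHom

theorem homc_discrete_of_compact_source_general
    (G A : Type*) [Group G] [TopologicalSpace G]
    [CompactSpace G]
    [CommGroup A] [TopologicalSpace A] [IsTopologicalGroup A]
    (hnss : ∃ U ∈ nhds (1 : A), ∀ H : Subgroup A, (H : Set A) ⊆ U → H = ⊥) :
    DiscreteTopology (ContinuousMonoidHom G A) := by
  obtain ⟨U, hU, hsmall⟩ := hnss
  obtain ⟨V, hVU, hVopen, hV1⟩ := mem_nhds_iff.mp hU
  have hsingleton : ({1} : Set (ContinuousMonoidHom G A)) = {f | ∀ x, f x ∈ V} := by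
    ext f
    refine ⟨fun hf x ↦ by simpa [Set.mem_singleton_iff.mp hf] using hV1, fun hf ↦ ?_⟩
    exact ContinuousMonoidHom.toMonoidHom_injective
      ((f : G →* A).eq_one_of_forall_mem hsmall fun x ↦ hVU (hf x))
  rw [discreteTopology_iff_isOpen_singleton_one, hsingleton]
  exact ContinuousMonoidHom.isOpen_setOf_forall_mem hVopen

/-- Let `G` be a compact Hausdorff group and `A` a Hausdorff abelian
topological group with no small subgroups. Then `Hom_c(G,A)`, with the compact-open topology,
is a discrete topological group. -/
theorem homc_discrete_of_compact_source
    (G A : Type*) [Group G] [TopologicalSpace G] [IsTopologicalGroup G]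
    [CompactSpace G] [T2Space G]
    [CommGroup A] [TopologicalSpace A] [IsTopologicalGroup A] [T2Space A]
    (hnss : ∃ U ∈ nhds (1 : A), ∀ H : Subgroup A, (H : Set A) ⊆ U → H = ⊥) :
    DiscreteTopology (ContinuousMonoidHom G A) :=
  homc_discrete_of_compact_source_general G A hnss
end

section
/- Let (A,μ) be a partially crossed topological G-R-bimodule where G is a discrete topological group and A and R are compact Hausdorff topological groups. Then Der_c(G,(A,μ)), with its subspace topology from C(G,A) × R (C(G,A) carrying the compact-open topology), is compact. -/
/- Both defining conditions are equations between continuous functions of `(α, r)`, pointwise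
in `G`, so the set is closed in `C(G,A) × R`; for discrete `G` the ambient space is the compact
product `Aᴳ × R`. -/

variable (G R A : Type*)
  [Group G] [TopologicalSpace G] [IsTopologicalGroup G]
  [Group R] [TopologicalSpace R] [IsTopologicalGroup R]
  [Group A] [TopologicalSpace A] [IsTopologicalGroup A]
  [MulDistribMulAction R A] [ContinuousSMul R A]
  [MulDistribMulAction G A] [ContinuousSMul G A]
  [MulDistribMulAction G R] [ContinuousSMul G R]

set_option linter.unusedSectionVars false in
lemma isClosed_derSet [T2Space A] [T2Space R] (μ : A →* R) (hμc : Continuous μ) :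
    IsClosed (derSet G R A μ) := by
  have hev : ∀ g : G, Continuous fun p : C(G, A) × R => p.1 g := fun g =>
    (continuous_eval_const g).comp continuous_fst
  simp only [derSet, Set.ofPred_and, Set.ofPred_forall]
  refine .inter (isClosed_iInter fun g => isClosed_iInter fun h => ?_) (isClosed_iInter fun g => ?_)
  · exact isClosed_eq (hev (g * h)) ((hev g).mul ((hev h).const_smul g))
  · exact isClosed_eq (hμc.comp (hev g)) (continuous_snd.mul (continuous_snd.const_smul g).inv)

theorem derc_bimodule_compact
    [DiscreteTopology G] [CompactSpace A] [T2Space A] [CompactSpace R] [T2Space R]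
    (μ : A →* R) (hμc : Continuous μ) :
    IsCompact (derSet G R A μ) := by
  have : CompactSpace C(G, A) := ContinuousMap.homeoFnOfDiscrete.symm.compactSpace
  exact (isClosed_derSet G R A μ hμc).isCompact
end
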